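/- arXiv:2012.04343 — 7 statements merged into one kernel-verified Lean document; each statement's English description precedes it below -/
import Mathlib

section
/- For any instance I of RAO (time budget T, articles with lengths t_i, hints h_i, and information rates c_i with codomain contained in [h_i]), the optimal value of the fractional Knapsack Problem for Hints (items with value t_i·h_i, weight t_i, capacity T) is at least the optimal offline value of RAO. -/
/-!
Reading the prefix of length `τ i` of article `i` earns at most `τ i * h i`, since every rate is
bounded by the hint. Taking the fraction `y i = τ i / t i` of item `i` in the knapsack earns exactly
that amount at weight `τ i`, so every feasible reading plan is dominated by a feasible fractional
knapsack solution.
-/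

open Finset

theorem sum_Icc_one_le_mul {f : ℕ → ℝ} {b : ℝ} (hf : ∀ j, f j ≤ b) (m : ℕ) :
    ∑ j ∈ Icc 1 m, f j ≤ m * b := by
  simpa using sum_le_card_nsmul (Icc 1 m) f b fun j _ => hf j

theorem natCast_div_mem_Icc {a b : ℕ} (hab : a ≤ b) : (a / b : ℝ) ∈ Set.Icc 0 1 :=
  ⟨by positivity, div_le_one_of_le₀ (by exact_mod_cast hab) (by positivity)⟩

theorem natCast_mul_div_cancel {a b : ℕ} (hab : a ≤ b) : (b : ℝ) * (a / b) = a :=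
  mul_div_cancel_of_imp' fun hb => by
    rw [Nat.cast_eq_zero] at hb ⊢
    omega

theorem exists_fractional_knapsack_of_prefixes {ι : Type*} [Fintype ι] {T : ℕ} {t τ : ι → ℕ}
    (hτ : ∀ i, τ i ≤ t i) (hT : ∑ i, τ i ≤ T) (h : ι → ℕ) :
    ∃ y : ι → ℝ, (∀ i, y i ∈ Set.Icc (0:ℝ) 1) ∧ (∑ i, (t i : ℝ) * y i) ≤ T ∧
      ∑ i, (τ i : ℝ) * h i = ∑ i, (t i : ℝ) * (h i : ℝ) * y i := by
  have hweight : ∀ i, (t i : ℝ) * (τ i / t i) = τ i := fun i => natCast_mul_div_cancel (hτ i)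
  refine ⟨fun i => τ i / t i, fun i => natCast_div_mem_Icc (hτ i), ?_, ?_⟩
  · simp only [hweight]
    exact_mod_cast hT
  · simp only [mul_right_comm _ (h _ : ℝ), hweight]

/-- For any RAO instance (budget `T`, lengths `t`, hints `h`,
information rates `c` with `c i j ≤ h i`), the optimal value `vK` of the fractional
Knapsack Problem for Hints (values `t i * h i`, weights `t i`, capacity `T`)
is at least the value of any feasible offline RAO solution, hence at least the
RAO offline optimum. -/
theorem rao_le_kph (n T : ℕ) (t h : Fin n → ℕ) (c : Fin n → ℕ → ℕ)
    (hc : ∀ i j, c i j ≤ h i)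
    (vK : ℝ)
    (hK : IsLUB {v : ℝ | ∃ y : Fin n → ℝ, (∀ i, y i ∈ Set.Icc (0:ℝ) 1) ∧
            (∑ i, (t i : ℝ) * y i) ≤ T ∧ v = ∑ i, (t i : ℝ) * (h i : ℝ) * y i} vK)
    (τ : Fin n → ℕ) (hτ : ∀ i, τ i ≤ t i) (hT : ∑ i, τ i ≤ T) :
    (∑ i, ∑ j ∈ Finset.Icc 1 (τ i), (c i j : ℝ)) ≤ vK := by
  have hprefix : ∀ i, ∑ j ∈ Icc 1 (τ i), (c i j : ℝ) ≤ τ i * h i := fun i =>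
    sum_Icc_one_le_mul (fun j => by exact_mod_cast hc i j) (τ i)
  calc ∑ i, ∑ j ∈ Icc 1 (τ i), (c i j : ℝ) ≤ ∑ i, (τ i : ℝ) * h i :=
        sum_le_sum fun i _ => hprefix i
    _ ≤ vK := hK.1 (exists_fractional_knapsack_of_prefixes hτ hT h)
end

section
/- If the information rates c_i may exceed the hints h_i, then any algorithm for RAO has competitive ratio Ω(√n). Concretely: for every ℓ ∈ ℕ with n = ℓ², there is an instance with T = n, t_i = n, h_i = n for all i, such that the optimal offline value is Θ(n^{2.5}) while every online algorithm (in the random order model) has expected value Θ(n²), hence at most Opt/√n (up to constants). -/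
/-!
Before step `ℓ = √n` an article of type A reads exactly like one of type B, so an online algorithm
decides to read `ℓ` or more steps of an article before it can know its type: such a probe finds
the spike `ℓ⁴` of a type-A article only with probability `a / m` when `a` of the `m` remaining
articles have type A. Charging an A-spike to the `ℓ` steps of its probe, and a B-spike to the
`n = ℓ²` steps needed to reach it, a budget of `β` steps earns in expectation at most
`β (ℓ² + 1 + ℓ³ a / m)`, which is `O(ℓ⁴) = O(n²)` for `β = m = n`, `a = ℓ`; this is proved by
induction on `m`. The value only depends on the sequence of types, and each sequence comes from at
most `ℓ! (n - ℓ)!` arrival orders, so the expectation becomes a sum over the `n.choose ℓ` type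
sequences. Offline, reading the first `ℓ` steps of the `ℓ` type-A articles earns `ℓ⁵`.
-/

/-- Reading one article online: given the algorithm `A` (which maps the history of
previously observed articles and the observations from the current article to the
decision whether to read one more time step), the history `hist`, the rate function
`c` of the current article and a fuel bound (remaining readable steps), return the
list of information values observed from this article. -/
def readSteps (A : List (List ℕ) → List ℕ → Bool) (hist : List (List ℕ)) (c : ℕ → ℕ) :
    ℕ → List ℕ → List ℕ
  | 0, obs => obs
  | fuel + 1, obs =>
      if A hist obs then readSteps A hist c fuel (obs ++ [c (obs.length + 1)]) else obs

/-- Run the online algorithm `A` on a stream of articles (each given by its length and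
its information-rate function), with the given remaining time budget; returns the total
information gained.  Decisions are online and discarding is irrevocable: every article
is processed once, in order. -/
def runAlg (A : List (List ℕ) → List ℕ → Bool) :
    List (List ℕ) → ℕ → List (ℕ × (ℕ → ℕ)) → ℕ
  | _, _, [] => 0
  | hist, budget, (len, c) :: rest =>
      let obs := readSteps A hist c (min len budget) []
      obs.sum + runAlg A (hist ++ [obs]) (budget - obs.length) rest

open Finset

section Reading

variable (A : List (List ℕ) → List ℕ → Bool) (hist : List (List ℕ))

theorem length_le_length_readSteps (c : ℕ → ℕ) :
    ∀ fuel obs, obs.length ≤ (readSteps A hist c fuel obs).length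
  | 0, _ => le_rfl
  | fuel + 1, obs => by
    rw [readSteps]
    split_ifs
    · exact (le_of_lt (by simp)).trans (length_le_length_readSteps c fuel _)
    · exact le_rfl

theorem length_readSteps_le (c : ℕ → ℕ) :
    ∀ fuel obs, (readSteps A hist c fuel obs).length ≤ obs.length + fuel
  | 0, _ => le_rfl
  | fuel + 1, obs => by
    rw [readSteps]
    split_ifs
    · have := length_readSteps_le c fuel (obs ++ [c (obs.length + 1)])
      simp only [List.length_append, List.length_singleton] at this
      omega
    · omega

theorem exists_readSteps_eq_append (c : ℕ → ℕ) :
    ∀ fuel obs, ∃ k, readSteps A hist c fuel obs = obs ++ (List.range' (obs.length + 1) k).map c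
  | 0, obs => ⟨0, by simp [readSteps]⟩
  | fuel + 1, obs => by
    rw [readSteps]
    split_ifs
    · obtain ⟨k, hk⟩ := exists_readSteps_eq_append c fuel (obs ++ [c (obs.length + 1)])
      exact ⟨k + 1, by simp [hk, List.range'_succ]⟩
    · exact ⟨0, by simp⟩

theorem sum_readSteps (c : ℕ → ℕ) (fuel : ℕ) :
    (readSteps A hist c fuel []).sum = ∑ j ∈ Icc 1 (readSteps A hist c fuel []).length, c j := by
  obtain ⟨k, hk⟩ := exists_readSteps_eq_append A hist c fuel []
  rw [hk, Nat.Icc_eq_range']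
  simp [Finset.sum]

theorem readSteps_eq_of_length_lt {ℓ : ℕ} {c₁ c₂ : ℕ → ℕ} (hc : ∀ i < ℓ, c₁ i = c₂ i) :
    ∀ fuel obs, (readSteps A hist c₁ fuel obs).length < ℓ →
      readSteps A hist c₂ fuel obs = readSteps A hist c₁ fuel obs
  | 0, _, _ => rfl
  | fuel + 1, obs, h => by
    simp only [readSteps] at h ⊢
    split_ifs at h ⊢
    · have hlen := (length_le_length_readSteps A hist c₁ fuel _).trans_lt h
      simp only [List.length_append, List.length_singleton] at hlen
      rw [hc _ (by omega)] at h ⊢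
      exact readSteps_eq_of_length_lt hc fuel _ h
    · rfl

end Reading

section Arrangements

def arrangements : ℕ → ℕ → Finset (List Bool)
  | 0, 0 => {[]}
  | 0, _ + 1 => ∅
  | m + 1, 0 => (arrangements m 0).map ⟨List.cons false, List.cons_injective⟩
  | m + 1, a + 1 => (arrangements m a).map ⟨List.cons true, List.cons_injective⟩ ∪
      (arrangements m (a + 1)).map ⟨List.cons false, List.cons_injective⟩

variable {M : Type*} [AddCommMonoid M]

theorem sum_arrangements_succ_zero (m : ℕ) (f : List Bool → M) :
    ∑ t ∈ arrangements (m + 1) 0, f t = ∑ t ∈ arrangements m 0, f (false :: t) := by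
  simp [arrangements]

theorem sum_arrangements_succ_succ (m a : ℕ) (f : List Bool → M) :
    ∑ t ∈ arrangements (m + 1) (a + 1), f t =
      ∑ t ∈ arrangements m a, f (true :: t) + ∑ t ∈ arrangements m (a + 1), f (false :: t) := by
  rw [arrangements, sum_union, sum_map, sum_map]
  · rfl
  · simp [disjoint_left]

theorem card_arrangements : ∀ m a, #(arrangements m a) = m.choose a
  | 0, 0 => rfl
  | 0, _ + 1 => rfl
  | m + 1, 0 => by
    rw [card_eq_sum_ones, sum_arrangements_succ_zero, ← card_eq_sum_ones, card_arrangements,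
      Nat.choose_zero_right, Nat.choose_zero_right]
  | m + 1, a + 1 => by
    rw [card_eq_sum_ones, sum_arrangements_succ_succ, ← card_eq_sum_ones, ← card_eq_sum_ones,
      card_arrangements, card_arrangements, Nat.choose_succ_succ]

theorem mem_arrangements {t : List Bool} {m a : ℕ} :
    t ∈ arrangements m a ↔ t.length = m ∧ t.count true = a := by
  induction t generalizing m a with
  | nil => cases m <;> cases a <;> simp [arrangements]
  | cons b t ih =>
    cases m <;> cases a <;> cases b <;> simp [arrangements, ih]

end Arrangements

section Permutations

open Equiv Nat

theorem card_filter_comp_eq_le {α ι : Type*} [Fintype α] [DecidableEq α] [Fintype ι]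
    [DecidableEq ι] (f g : α → ι) :
    #{π : Perm α | f ∘ π = g} ≤ ∏ i, (Fintype.card {a // f a = i})! := by
  rw [← DomMulAct.stabilizer_card, Fintype.card_subtype]
  obtain ⟨π₀, hπ₀⟩ | hempty :=
    (filter (fun π : Perm α => f ∘ π = g) univ).eq_empty_or_nonempty.symm
  · rw [mem_filter] at hπ₀
    refine card_le_card_of_injOn (· * π₀⁻¹) (fun π hπ => ?_) fun π _ σ _ h => mul_right_cancel h
    rw [mem_coe, mem_filter] at hπ ⊢
    refine ⟨mem_univ _, funext fun a => ?_⟩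
    simpa using (congrFun hπ.2 (π₀⁻¹ a)).trans (congrFun hπ₀.2 (π₀⁻¹ a)).symm
  · simp [hempty]

theorem count_true_ofFn {n : ℕ} (g : Fin n → Bool) :
    (List.ofFn g).count true = #{i | g i = true} := by
  induction n with
  | zero => simp
  | succ n ih =>
    rw [List.ofFn_succ, List.count_cons, ih, Fin.card_filter_univ_succ]
    cases g 0 <;> simp

theorem sum_perm_le_sum_arrangements {n : ℕ} (f : Fin n → Bool) (G : List Bool → ℕ) :
    ∑ π : Perm (Fin n), G (List.ofFn (f ∘ π)) ≤
      (∏ b, (Fintype.card {i // f i = b})!) * ∑ t ∈ arrangements n #{i | f i = true}, G t := by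
  have hmaps : ∀ π ∈ (univ : Finset (Perm (Fin n))),
      List.ofFn (f ∘ π) ∈ arrangements n #{i | f i = true} := by
    intro π _
    rw [mem_arrangements, List.length_ofFn, count_true_ofFn, card_filter, card_filter]
    exact ⟨rfl, Equiv.sum_comp π (fun i => if f i = true then 1 else 0)⟩
  rw [← sum_fiberwise_of_maps_to hmaps, mul_sum]
  gcongr with t
  rw [sum_congr rfl fun π hπ => congrArg G (mem_filter.1 hπ).2, sum_const, smul_eq_mul]
  gcongr
  obtain ⟨π₀, hπ₀⟩ | hempty :=
    (filter (fun π : Perm (Fin n) => List.ofFn (f ∘ π) = t) univ).eq_empty_or_nonempty.symm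
  · rw [mem_filter] at hπ₀
    simp_rw [← hπ₀.2, List.ofFn_inj]
    exact card_filter_comp_eq_le f (f ∘ π₀)
  · simp [hempty]

end Permutations

section OnlineBound

/-- The number of lists in `arrangements m a` that start with `true`, i.e. `a / m * m.choose a`. -/
def headTrueCount : ℕ → ℕ → ℕ
  | m + 1, a + 1 => m.choose a
  | _, _ => 0

theorem headTrueCount_zero_right (m : ℕ) : headTrueCount m 0 = 0 := by
  cases m <;> rfl

theorem headTrueCount_add_headTrueCount_succ_le (m a : ℕ) :
    headTrueCount m a + headTrueCount m (a + 1) ≤ m.choose a := by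
  rcases m with _ | m
  · simp [headTrueCount]
  · rcases a with _ | a
    · simp [headTrueCount]
    · simp [headTrueCount, Nat.choose_succ_succ]

theorem mul_headTrueCount (m a : ℕ) : m * headTrueCount m a = a * m.choose a := by
  rcases m with _ | m
  · rcases a with _ | a <;> simp [headTrueCount]
  · rcases a with _ | a
    · simp [headTrueCount]
    · rw [headTrueCount, Nat.add_one_mul_choose_eq, mul_comm]

/-- The induction step of `sum_runAlg_arrangements_le`: in `N₁` (resp. `N₂`) of the arrangements
the next article has type A (resp. B); it is then read for `d₁` (resp. `d₂`) steps and earns `g₁`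
(resp. `g₂`). -/
theorem probe_step_le {r L ℓ β d₁ d₂ g₁ g₂ N₁ N₂ P₁ P₂ : ℕ} (hP : P₁ + P₂ ≤ N₁)
    (hd₁ : d₁ ≤ β) (hd₂ : d₂ ≤ β) (hg₁ : g₁ ≤ r * d₁ + if ℓ ≤ d₁ then L * ℓ else 0)
    (hg₂ : g₂ ≤ r * d₂) (hprobe : ℓ ≤ d₁ → ℓ ≤ d₂) :
    (N₁ * g₁ + (β - d₁) * (r * N₁ + L * P₁)) + (N₂ * g₂ + (β - d₂) * (r * N₂ + L * P₂)) ≤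
      β * (r * (N₁ + N₂) + L * N₁) := by
  have hA :
      N₁ * g₁ + (β - d₁) * (r * N₁) ≤ β * (r * N₁) + N₁ * (if ℓ ≤ d₁ then L * ℓ else 0) :=
    calc N₁ * g₁ + (β - d₁) * (r * N₁)
        ≤ N₁ * (r * d₁ + if ℓ ≤ d₁ then L * ℓ else 0) + (β - d₁) * (r * N₁) := by gcongr
      _ = (d₁ + (β - d₁)) * (r * N₁) + N₁ * (if ℓ ≤ d₁ then L * ℓ else 0) := by ring
      _ = β * (r * N₁) + N₁ * (if ℓ ≤ d₁ then L * ℓ else 0) := by rw [Nat.add_sub_cancel' hd₁]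
  have hB : N₂ * g₂ + (β - d₂) * (r * N₂) ≤ β * (r * N₂) :=
    calc N₂ * g₂ + (β - d₂) * (r * N₂) ≤ N₂ * (r * d₂) + (β - d₂) * (r * N₂) := by gcongr
      _ = (d₂ + (β - d₂)) * (r * N₂) := by ring
      _ = β * (r * N₂) := by rw [Nat.add_sub_cancel' hd₂]
  have hL : N₁ * (if ℓ ≤ d₁ then L * ℓ else 0) + (β - d₁) * (L * P₁) + (β - d₂) * (L * P₂) ≤
      β * (L * N₁) := by
    split_ifs with hℓ
    · have hℓ₂ := hprobe hℓ
      calc N₁ * (L * ℓ) + (β - d₁) * (L * P₁) + (β - d₂) * (L * P₂)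
          ≤ N₁ * (L * ℓ) + (β - ℓ) * (L * P₁) + (β - ℓ) * (L * P₂) := by gcongr
        _ = N₁ * (L * ℓ) + (β - ℓ) * (L * (P₁ + P₂)) := by ring
        _ ≤ N₁ * (L * ℓ) + (β - ℓ) * (L * N₁) := by gcongr
        _ = (ℓ + (β - ℓ)) * (L * N₁) := by ring
        _ = β * (L * N₁) := by rw [Nat.add_sub_cancel' (hℓ.trans hd₁)]
    · calc N₁ * 0 + (β - d₁) * (L * P₁) + (β - d₂) * (L * P₂)
          = (β - d₁) * (L * P₁) + (β - d₂) * (L * P₂) := by ring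
        _ ≤ β * (L * P₁) + β * (L * P₂) := by gcongr <;> exact Nat.sub_le _ _
        _ = β * (L * (P₁ + P₂)) := by ring
        _ ≤ β * (L * N₁) := by gcongr
  linarith

theorem sum_runAlg_arrangements_le (A : List (List ℕ) → List ℕ → Bool) (len : ℕ)
    {cA cB : ℕ → ℕ} {ℓ r L : ℕ} (hagree : ∀ i < ℓ, cA i = cB i)
    (hA : ∀ d, ∑ j ∈ Icc 1 d, cA j ≤ r * d + if ℓ ≤ d then L * ℓ else 0)
    (hB : ∀ d, ∑ j ∈ Icc 1 d, cB j ≤ r * d) (m a : ℕ) (hist : List (List ℕ)) (β : ℕ) :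
    ∑ t ∈ arrangements m a, runAlg A hist β (t.map fun x => (len, if x then cA else cB)) ≤
      β * (r * m.choose a + L * headTrueCount m a) := by
  induction m generalizing a hist β with
  | zero =>
    refine (sum_eq_zero fun t ht => ?_).trans_le (Nat.zero_le _)
    rw [List.eq_nil_of_length_eq_zero (mem_arrangements.1 ht).1]
    rfl
  | succ m ih =>
    set read := fun c => readSteps A hist c (min len β) []
    have hbranch : ∀ c a', ∑ t ∈ arrangements m a',
        runAlg A hist β ((len, c) :: t.map fun x => (len, if x then cA else cB)) ≤
          m.choose a' * (read c).sum +
            (β - (read c).length) * (r * m.choose a' + L * headTrueCount m a') := by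
      intro c a'
      simp only [runAlg]
      rw [sum_add_distrib, sum_const, card_arrangements, smul_eq_mul]
      gcongr
      exact ih _ _ _
    have hlen : ∀ c, (read c).length ≤ β := fun c =>
      (length_readSteps_le A hist c _ []).trans (by simp)
    have hgA :
        (read cA).sum ≤ r * (read cA).length + if ℓ ≤ (read cA).length then L * ℓ else 0 := by
      rw [sum_readSteps]; exact hA _
    have hgB : (read cB).sum ≤ r * (read cB).length := by
      rw [sum_readSteps]; exact hB _
    have hprobe : ℓ ≤ (read cA).length → ℓ ≤ (read cB).length := by
      intro h
      by_contra! h'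
      have := readSteps_eq_of_length_lt A hist (fun i hi => (hagree i hi).symm) _ _ h'
      rw [show read cA = read cB from this] at h
      omega
    rcases a with _ | a
    · rw [sum_arrangements_succ_zero]
      refine (hbranch cB 0).trans ?_
      simp only [headTrueCount_zero_right, Nat.choose_zero_right, mul_zero, add_zero, one_mul,
        mul_one]
      calc (read cB).sum + (β - (read cB).length) * r
          ≤ r * (read cB).length + (β - (read cB).length) * r := by gcongr
        _ = β * r := by rw [mul_comm r, ← add_mul, Nat.add_sub_cancel' (hlen cB)]
    · rw [sum_arrangements_succ_succ]
      refine (add_le_add (hbranch cA a) (hbranch cB (a + 1))).trans ?_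
      rw [Nat.choose_succ_succ]
      exact probe_step_le (headTrueCount_add_headTrueCount_succ_le m a) (hlen cA) (hlen cB)
        hgA hgB hprobe

end OnlineBound

section Instance

open Equiv Nat

def spikeRate (p v j : ℕ) : ℕ := if j = p then v else 1

theorem sum_Icc_spikeRate_le (p v d : ℕ) :
    ∑ j ∈ Icc 1 d, spikeRate p v j ≤ d + if p ≤ d then v else 0 :=
  calc ∑ j ∈ Icc 1 d, spikeRate p v j ≤ ∑ j ∈ Icc 1 d, (1 + if j = p then v else 0) :=
        sum_le_sum fun j _ => by unfold spikeRate; split_ifs <;> simp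
    _ = d + if p ∈ Icc 1 d then v else 0 := by rw [sum_add_distrib, sum_ite_eq']; simp
    _ ≤ d + if p ≤ d then v else 0 := by gcongr; split_ifs <;> simp_all

theorem prod_factorial_card_val_lt {n ℓ : ℕ} (h : ℓ ≤ n) :
    ∏ b, (Fintype.card {i : Fin n // decide ((i : ℕ) < ℓ) = b})! = ℓ ! * (n - ℓ)! := by
  have htrue : Fintype.card {i : Fin n // decide ((i : ℕ) < ℓ) = true} = ℓ := by
    simp only [decide_eq_true_eq]
    rw [Fintype.card_subtype, Fin.card_filter_val_lt, min_eq_right h]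
  have hfalse : Fintype.card {i : Fin n // decide ((i : ℕ) < ℓ) = false} = n - ℓ := by
    simp only [decide_eq_false_iff_not]
    rw [Fintype.card_subtype_compl, Fintype.card_fin, Fintype.card_subtype,
      Fin.card_filter_val_lt, min_eq_right h]
  rw [Fintype.prod_bool, htrue, hfalse]

theorem exists_offline_ge {n ℓ v : ℕ} (art : Fin n → ℕ → ℕ) (hℓ : ℓ * ℓ ≤ n)
    (hart : ∀ i : Fin n, (i : ℕ) < ℓ → art i ℓ = v) :
    ∃ τ : Fin n → ℕ, (∀ i, τ i ≤ n) ∧ (∑ i, τ i ≤ n) ∧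
      ℓ * v ≤ ∑ i, ∑ j ∈ Icc 1 (τ i), art i j := by
  have hℓn : ℓ ≤ n := (Nat.le_mul_self ℓ).trans hℓ
  have hcard : #{i : Fin n | (i : ℕ) < ℓ} = ℓ := by rw [Fin.card_filter_val_lt, min_eq_right hℓn]
  refine ⟨fun i => if (i : ℕ) < ℓ then ℓ else 0, fun i => ?_, ?_, ?_⟩ <;> dsimp only
  · split_ifs
    · exact hℓn
    · exact Nat.zero_le _
  · rw [← sum_filter, sum_const, hcard, smul_eq_mul]
    exact hℓ
  · calc ℓ * v = ∑ i : Fin n, if (i : ℕ) < ℓ then v else 0 := by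
          rw [← sum_filter, sum_const, hcard, smul_eq_mul]
      _ ≤ _ := sum_le_sum fun i _ => by
          split_ifs with hi
          · rw [← hart i hi]
            exact single_le_sum (fun j _ => Nat.zero_le _) (by simp; omega)
          · exact Nat.zero_le _

theorem factorial_mul_online_bound_le {ℓ : ℕ} (hℓ : 1 ≤ ℓ) :
    ℓ ! * (ℓ ^ 2 - ℓ)! *
        (ℓ ^ 2 * ((ℓ ^ 2 + 1) * (ℓ ^ 2).choose ℓ + ℓ ^ 3 * headTrueCount (ℓ ^ 2) ℓ)) ≤
      4 * ℓ ^ 4 * (ℓ ^ 2)! := by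
  have hfac := Nat.choose_mul_factorial_mul_factorial (show ℓ ≤ ℓ ^ 2 by nlinarith)
  have hP := mul_headTrueCount (ℓ ^ 2) ℓ
  have : ℓ ^ 2 ≤ ℓ ^ 4 := Nat.pow_le_pow_right hℓ (by norm_num)
  calc _ = ((ℓ ^ 2).choose ℓ * ℓ ! * (ℓ ^ 2 - ℓ)!) * (ℓ ^ 4 + ℓ ^ 2 + ℓ ^ 4) := by
        linear_combination (ℓ ! * (ℓ ^ 2 - ℓ)! * ℓ ^ 3) * hP
    _ ≤ _ := by rw [hfac]; nlinarith

theorem sum_perm_runAlg_spikeRate_le {ℓ : ℕ} (hℓ : 2 ≤ ℓ) (A : List (List ℕ) → List ℕ → Bool) :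
    ∑ π : Perm (Fin (ℓ ^ 2)), runAlg A [] (ℓ ^ 2)
        ((List.ofFn ((fun i : Fin (ℓ ^ 2) => decide ((i : ℕ) < ℓ)) ∘ π)).map
          fun x => (ℓ ^ 2, if x then spikeRate ℓ (ℓ ^ 4) else spikeRate (ℓ ^ 2) (ℓ ^ 4)))
      ≤ 4 * ℓ ^ 4 * (ℓ ^ 2)! := by
  have hℓn : ℓ < ℓ ^ 2 := by nlinarith
  have hagree : ∀ i < ℓ, spikeRate ℓ (ℓ ^ 4) i = spikeRate (ℓ ^ 2) (ℓ ^ 4) i := fun i hi => by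
    simp [spikeRate, hi.ne, (hi.trans hℓn).ne]
  have hA (d : ℕ) : ∑ j ∈ Icc 1 d, spikeRate ℓ (ℓ ^ 4) j ≤
      (ℓ ^ 2 + 1) * d + if ℓ ≤ d then ℓ ^ 3 * ℓ else 0 := by
    have := sum_Icc_spikeRate_le ℓ (ℓ ^ 4) d
    split_ifs at this ⊢ <;> nlinarith
  have hB (d : ℕ) : ∑ j ∈ Icc 1 d, spikeRate (ℓ ^ 2) (ℓ ^ 4) j ≤ (ℓ ^ 2 + 1) * d := by
    have := sum_Icc_spikeRate_le (ℓ ^ 2) (ℓ ^ 4) d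
    split_ifs at this <;> nlinarith
  refine (sum_perm_le_sum_arrangements (fun i => decide ((i : ℕ) < ℓ)) fun t =>
    runAlg A [] (ℓ ^ 2) (t.map fun x =>
      (ℓ ^ 2, if x then spikeRate ℓ (ℓ ^ 4) else spikeRate (ℓ ^ 2) (ℓ ^ 4)))).trans ?_
  rw [prod_factorial_card_val_lt hℓn.le]
  simp only [decide_eq_true_eq, Fin.card_filter_val_lt, min_eq_right hℓn.le]
  exact (Nat.mul_le_mul_left _ (sum_runAlg_arrangements_le A (ℓ ^ 2) hagree hA hB _ _ _ _)).trans
    (factorial_mul_online_bound_le (by omega))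

end Instance

/-- If information rates may exceed the hints, online reading is
`Ω(√n)`-competitive: for `n = ℓ²`, `T = n`, all lengths and hints equal to `n`, with
`√n` articles of type A (rate `n² = ℓ⁴` at step `ℓ`, else `1`) and the rest of type B
(rate `ℓ⁴` at step `n`, else `1`), the offline optimum is at least `ℓ⁵ = n^{2.5}`,
while every (deterministic) online algorithm has expected value `O(n²) = O(ℓ⁴)` over
the uniformly random arrival order; hence at most `Opt/√n` up to constants. -/
theorem rates_exceeding_hints_lower_bound (ℓ : ℕ) (hℓ : 2 ≤ ℓ) :
    ∀ n, n = ℓ ^ 2 →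
    ∀ art : Fin n → ℕ → ℕ,
      (art = fun i : Fin n => if (i : ℕ) < ℓ then (fun j => if j = ℓ then ℓ ^ 4 else 1)
                      else (fun j => if j = n then ℓ ^ 4 else 1)) →
      -- the offline optimum is Θ(n^{2.5}): some feasible offline solution gains ≥ ℓ⁵
      ((∃ τ : Fin n → ℕ, (∀ i, τ i ≤ n) ∧ (∑ i, τ i ≤ n) ∧
          ℓ ^ 5 ≤ ∑ i, ∑ j ∈ Finset.Icc 1 (τ i), art i j) ∧
      -- while every online algorithm gains only Θ(n²) in expectation
      (∀ A : List (List ℕ) → List ℕ → Bool,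
          ∑ π : Equiv.Perm (Fin n),
              runAlg A [] n (List.ofFn fun k => (n, art (π k)))
            ≤ 4 * ℓ ^ 4 * Nat.factorial n)) := by
  intro n hn art hart
  subst hn hart
  refine ⟨?_, fun A => ?_⟩
  · obtain ⟨τ, hτ, hsum, hval⟩ := exists_offline_ge (v := ℓ ^ 4)
      (fun i : Fin (ℓ ^ 2) =>
        if (i : ℕ) < ℓ then spikeRate ℓ (ℓ ^ 4) else spikeRate (ℓ ^ 2) (ℓ ^ 4))
      (sq ℓ).ge fun i hi => by simp [hi, spikeRate]
    exact ⟨τ, hτ, hsum, (pow_succ' ℓ 4).trans_le hval⟩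
  · refine le_of_eq_of_le (sum_congr rfl fun π _ => ?_) (sum_perm_runAlg_spikeRate_le hℓ A)
    simp only [List.map_ofFn, Function.comp_def, decide_eq_true_eq]
    rfl
end

section
/- If article lengths may exceed the time budget, any algorithm for RAO is Ω(n)-competitive. Concretely: for the instance with T = 2, n articles each of length 3 and hint M = n, where article k has rates (1, M, 1) and all other articles have rates (1, 1, M), the optimal offline value is M + 1, while the expected value of any online algorithm in the random order model is at most (1/n)(M+1) + 2(1 − 1/n) ≤ (2/n + 2/M)·(M+1). -/
/-! Offline, reading the first two steps of article `k` collects `1 + M`, and every other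
schedule of at most two steps only meets rates equal to `1`.

Online, every article starts with rate `1`. Until the algorithm reads a step it has observed
nothing but empty readings, so the position of the first article it starts to read is fixed by
the algorithm alone, whatever the arrival order. With a budget of two steps it collects at most
`max 2 (1 + c₂)`, where `c₂` is the second rate of the article at that position; this is `M + 1`
only when article `k` arrives there, which happens for `(n - 1)!` of the `n!` orders. -/

theorem Equiv.Perm.sum_apply_eq_factorial_smul_sum {α β : Type*} [Fintype α] [DecidableEq α]
    [AddCommMonoid β] [IsAddTorsionFree β] (f : α → β) (a : α) :
    ∑ π : Equiv.Perm α, f (π a) = (Fintype.card α - 1).factorial • ∑ x, f x := by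
  have h_indep (b : α) : ∑ π : Equiv.Perm α, f (π b) = ∑ π : Equiv.Perm α, f (π a) :=
    Fintype.sum_equiv (Equiv.mulRight (Equiv.swap b a)) _ _ fun π => by simp
  have hcard : Fintype.card α ≠ 0 := (Fintype.card_pos_iff.mpr ⟨a⟩).ne'
  apply IsAddTorsionFree.nsmul_right_injective hcard
  calc Fintype.card α • ∑ π : Equiv.Perm α, f (π a)
      = ∑ b, ∑ π : Equiv.Perm α, f (π b) := by simp [h_indep]
    _ = ∑ π : Equiv.Perm α, ∑ x, f x :=
        Finset.sum_comm.trans (Finset.sum_congr rfl fun π _ => Equiv.sum_comp π f)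
    _ = Fintype.card α • ((Fintype.card α - 1).factorial • ∑ x, f x) := by
        rw [Finset.sum_const, Finset.card_univ, Fintype.card_perm, smul_smul,
          Nat.mul_factorial_pred hcard]

section Online

variable (A : List (List ℕ) → List ℕ → Bool)

theorem runAlg_budget_zero (L : List (ℕ × (ℕ → ℕ))) (hist : List (List ℕ)) :
    runAlg A hist 0 L = 0 := by
  induction L generalizing hist with
  | nil => rfl
  | cons a L ih => simp [runAlg, readSteps, ih]

theorem readSteps_one_nil (hist : List (List ℕ)) (c : ℕ → ℕ) :
    readSteps A hist c 1 [] = if A hist [] then [c 1] else [] := by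
  simp [readSteps]

theorem readSteps_two_nil (hist : List (List ℕ)) (c : ℕ → ℕ) :
    readSteps A hist c 2 [] =
      if A hist [] then (if A hist [c 1] then [c 1, c 2] else [c 1]) else [] := by
  by_cases h : A hist [] <;> by_cases h' : A hist [c 1] <;> simp [readSteps, h, h']

theorem runAlg_budget_one_le {len : ℕ} (hlen : 1 ≤ len) (L : List (ℕ → ℕ))
    (hL : ∀ c ∈ L, c 1 = 1) (hist : List (List ℕ)) :
    runAlg A hist 1 (L.map fun c => (len, c)) ≤ 1 := by
  induction L generalizing hist with
  | nil => simp [runAlg]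
  | cons c L ih =>
    have hc : c 1 = 1 := hL c List.mem_cons_self
    have ih' := ih (fun d hd => hL d (List.mem_cons_of_mem c hd))
    rw [List.map_cons, runAlg, min_eq_right hlen, readSteps_one_nil]
    by_cases h : A hist [] <;> simp [h, hc, runAlg_budget_zero, ih']

def firstRead : List (List ℕ) → ℕ → ℕ
  | _, 0 => 0
  | hist, m + 1 => if A hist [] then 0 else firstRead (hist ++ [[]]) m + 1

theorem runAlg_budget_two_le {len : ℕ} (hlen : 2 ≤ len) (L : List (ℕ → ℕ))
    (hL : ∀ c ∈ L, c 1 = 1) (hist : List (List ℕ)) :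
    runAlg A hist 2 (L.map fun c => (len, c)) ≤
      max 2 (1 + (L.getD (firstRead A hist L.length) fun _ => 1) 2) := by
  induction L generalizing hist with
  | nil => simp [runAlg]
  | cons c L ih =>
    have hc : c 1 = 1 := hL c List.mem_cons_self
    have hL' : ∀ d ∈ L, d 1 = 1 := fun d hd => hL d (List.mem_cons_of_mem c hd)
    rw [List.map_cons, runAlg, min_eq_right hlen, readSteps_two_nil, hc, List.length_cons,
      firstRead]
    by_cases h : A hist []
    · by_cases h' : A hist [1]
      · simp [h, h', runAlg_budget_zero]
      · have := runAlg_budget_one_le A (by omega : 1 ≤ len) L hL' (hist ++ [[1]])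
        simp [h, h']
        omega
    · simpa [h] using ih hL' (hist ++ [[]])

theorem exists_position_runAlg_budget_two_le {n len : ℕ} (hn : 0 < n) (hlen : 2 ≤ len)
    (art : Fin n → ℕ → ℕ) (hart : ∀ i, art i 1 = 1) :
    ∃ i₀ : Fin n, ∀ π : Equiv.Perm (Fin n),
      runAlg A [] 2 (List.ofFn fun r => (len, art (π r))) ≤ max 2 (1 + art (π i₀) 2) := by
  have key (π : Equiv.Perm (Fin n)) :=
    runAlg_budget_two_le A hlen (List.ofFn fun r => art (π r)) (by simp [List.mem_ofFn, hart]) []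
  simp only [List.map_ofFn, Function.comp_def, List.length_ofFn] at key
  by_cases hr : firstRead A [] n < n
  · refine ⟨⟨_, hr⟩, fun π => ?_⟩
    simpa [hr] using key π
  · refine ⟨⟨0, hn⟩, fun π => ?_⟩
    exact (key π).trans (by simp [hr])

end Online

section HardInstance

variable {n : ℕ} (M : ℕ) (k : Fin n)

def hardRates : Fin n → ℕ → ℕ := fun i =>
  if i = k then (fun j => if j = 2 then M else 1) else (fun j => if j = 3 then M else 1)

theorem hardRates_apply_one (i : Fin n) : hardRates M k i 1 = 1 := by
  simp [hardRates, ite_apply]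

theorem max_two_one_add_hardRates_le (hM : 1 ≤ M) (i : Fin n) :
    max 2 (1 + hardRates M k i 2) ≤ if i = k then M + 1 else 2 := by
  simp only [hardRates, ite_apply]; split_ifs <;> omega

theorem sum_Icc_hardRates_self : ∑ j ∈ Finset.Icc 1 2, hardRates M k k j = M + 1 := by
  simp [hardRates, Finset.sum_Icc_succ_top, add_comm]

theorem sum_Icc_hardRates_of_le {i : Fin n} {t : ℕ} (ht : t ≤ 2) (hk : i = k → t ≤ 1) :
    ∑ j ∈ Finset.Icc 1 t, hardRates M k i j = t := by
  have hone : ∀ j ∈ Finset.Icc 1 t, hardRates M k i j = 1 := by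
    intro j hj
    rw [Finset.mem_Icc] at hj
    simp only [hardRates, ite_apply]
    split_ifs <;> omega
  simp [Finset.sum_congr rfl hone]

theorem exists_offline_value_eq :
    ∃ τ : Fin n → ℕ, (∀ i, τ i ≤ 3) ∧ (∑ i, τ i ≤ 2) ∧
      (∑ i, ∑ j ∈ Finset.Icc 1 (τ i), hardRates M k i j) = M + 1 := by
  refine ⟨Pi.single k 2, fun i => ?_, by simp, ?_⟩
  · by_cases hi : i = k <;> simp [hi]
  · rw [Finset.sum_eq_single k (fun i _ hi => by simp [hi]) (by simp)]
    simpa using sum_Icc_hardRates_self M k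

theorem offline_value_le (hM : 1 ≤ M) (τ : Fin n → ℕ) (hτ : ∑ i, τ i ≤ 2) :
    (∑ i, ∑ j ∈ Finset.Icc 1 (τ i), hardRates M k i j) ≤ M + 1 := by
  have hτ_le (i : Fin n) : τ i ≤ 2 :=
    (Finset.single_le_sum (fun _ _ => Nat.zero_le _) (Finset.mem_univ i)).trans hτ
  by_cases hk : τ k = 2
  · have hsplit := Finset.add_sum_erase Finset.univ τ (Finset.mem_univ k)
    have hzero : ∀ i ∈ Finset.univ.erase k, τ i = 0 :=
      Finset.sum_eq_zero_iff.mp (by omega)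
    rw [Finset.sum_eq_single k (fun i _ hi => by simp [hzero i (by simp [hi])]) (by simp), hk,
      sum_Icc_hardRates_self]
  · calc (∑ i, ∑ j ∈ Finset.Icc 1 (τ i), hardRates M k i j)
        = ∑ i, τ i := Finset.sum_congr rfl fun i _ =>
          sum_Icc_hardRates_of_le M k (hτ_le i) fun hi => by have := hτ_le k; subst hi; omega
      _ ≤ M + 1 := by omega

theorem sum_ite_eq_add_two_mul :
    ∑ i : Fin n, (if i = k then M + 1 else 2) = (M + 1) + 2 * (n - 1) := by
  simp [Finset.sum_ite, Finset.filter_eq', Finset.filter_ne', mul_comm]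

end HardInstance

/-- If article lengths may exceed the budget, RAO is `Ω(n)`-hard:
with `T = 2`, `n` articles of length `3` and hint `M = n`, where article `k` has rates
`(1, M, 1)` and all others `(1, 1, M)`, the offline optimum equals `M + 1`, while every
(deterministic) online algorithm has expected value over the uniformly random order at
most `(1/n)(M+1) + 2(1 - 1/n)`, i.e. summed over all `n!` orders, at most
`(n-1)!·((M+1) + 2(n-1))`. -/
theorem lengths_exceeding_budget_lower_bound (n M : ℕ) (hn : 1 ≤ n) (hM : M = n)
    (k : Fin n) (art : Fin n → ℕ → ℕ)
    (hart : art = fun i : Fin n =>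
      if i = k then (fun j => if j = 2 then M else 1)
      else (fun j => if j = 3 then M else 1)) :
    -- the offline optimum is M + 1
    ((∃ τ : Fin n → ℕ, (∀ i, τ i ≤ 3) ∧ (∑ i, τ i ≤ 2) ∧
        (∑ i, ∑ j ∈ Finset.Icc 1 (τ i), art i j) = M + 1) ∧
    (∀ τ : Fin n → ℕ, (∀ i, τ i ≤ 3) → (∑ i, τ i ≤ 2) →
        (∑ i, ∑ j ∈ Finset.Icc 1 (τ i), art i j) ≤ M + 1) ∧
    -- any online algorithm is bad in expectation over the random order
    (∀ A : List (List ℕ) → List ℕ → Bool,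
        ∑ π : Equiv.Perm (Fin n),
            runAlg A [] 2 (List.ofFn fun r => (3, art (π r)))
          ≤ Nat.factorial (n - 1) * ((M + 1) + 2 * (n - 1)))) := by
  have hM_pos : 1 ≤ M := hM ▸ hn
  change art = hardRates M k at hart
  subst hart
  refine ⟨exists_offline_value_eq M k, fun τ _ hτ => offline_value_le M k hM_pos τ hτ,
    fun A => ?_⟩
  obtain ⟨i₀, hi₀⟩ := exists_position_runAlg_budget_two_le A hn (by norm_num : 2 ≤ 3)
    (hardRates M k) (hardRates_apply_one M k)
  calc ∑ π : Equiv.Perm (Fin n), runAlg A [] 2 (List.ofFn fun r => (3, hardRates M k (π r)))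
      ≤ ∑ π : Equiv.Perm (Fin n), (if π i₀ = k then M + 1 else 2) :=
        Finset.sum_le_sum fun π _ => (hi₀ π).trans (max_two_one_add_hardRates_le M k hM_pos _)
    _ = (n - 1).factorial * ((M + 1) + 2 * (n - 1)) := by
        rw [Equiv.Perm.sum_apply_eq_factorial_smul_sum (fun i => if i = k then M + 1 else 2),
          Fintype.card_fin, sum_ite_eq_add_two_mul, smul_eq_mul]
end

section
/- Given an α-competitive algorithm ALG for the Online Knapsack Problem in the random order model, the Reduction Algorithm (run ALG with probability δ = α/(e+α) on values t_i·h_i and weights t_i, otherwise run the e-competitive Secretary Algorithm on values t_i·h_i) is (e + α)·C-competitive for RAO, where C is the accuracy of the hints and all t_i ≤ T. -/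
/-!
Every rate is bounded by the hint, so an offline solution `τ` gains at most `∑ τ i * h i`, the
value of a fractional knapsack solution with weights `t` and densities `h`. Filling the budget
greedily in order of decreasing density yields a feasible set `F` and a pivot article `i₀` that
no longer fits; weak duality with multiplier `h i₀` bounds the fractional value by
`∑ i ∈ F, t i * h i + t i₀ * h i₀`. The first term is at most `α` times the expected hint value
of the knapsack algorithm, the second at most `e` times that of the secretary algorithm, and by
the accuracy of the hints each `t i * h i` is at most `C` times the information of reading
article `i` completely. Mixing with probabilities `α / (e + α)` and `e / (e + α)` gives the
factor `(e + α) * C`.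
-/

open Finset

section Knapsack

variable {ι : Type*} [Fintype ι] [DecidableEq ι]

/-- Weak duality for the fractional knapsack LP, with multiplier `μ` for the budget constraint. -/
theorem sum_mul_le_sum_mul_add_of_threshold (F : Finset ι) {w x h : ι → ℝ} {T μ : ℝ}
    (hμ : 0 ≤ μ) (hx0 : ∀ i, 0 ≤ x i) (hxw : ∀ i, x i ≤ w i) (hxT : ∑ i, x i ≤ T)
    (hF : ∀ i ∈ F, μ ≤ h i) (hFc : ∀ i ∉ F, h i ≤ μ) :
    ∑ i, x i * h i ≤ ∑ i ∈ F, w i * h i + μ * (T - ∑ i ∈ F, w i) := by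
  have key : ∑ i, x i * (h i - μ) ≤ ∑ i ∈ F, w i * (h i - μ) := by
    rw [← sum_add_sum_compl F]
    have hin : ∑ i ∈ F, x i * (h i - μ) ≤ ∑ i ∈ F, w i * (h i - μ) :=
      sum_le_sum fun i hi => mul_le_mul_of_nonneg_right (hxw i) (sub_nonneg.2 (hF i hi))
    have hout : ∑ i ∈ Fᶜ, x i * (h i - μ) ≤ 0 :=
      sum_nonpos fun i hi =>
        mul_nonpos_of_nonneg_of_nonpos (hx0 i) (sub_nonpos.2 (hFc i (mem_compl.1 hi)))
    linarith
  simp only [mul_sub, sum_sub_distrib, ← sum_mul] at key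
  nlinarith [mul_le_mul_of_nonneg_left hxT hμ]

theorem exists_greedy_split (t : ι → ℕ) (h : ι → ℝ) (T : ℕ) :
    ∃ F : Finset ι, ∑ i ∈ F, t i ≤ T ∧ (∀ i ∈ F, ∀ j ∉ F, h j ≤ h i) ∧
      (F = univ ∨ ∃ i₀ ∉ F, T < ∑ i ∈ F, t i + t i₀ ∧ ∀ j ∉ F, h j ≤ h i₀) := by
  classical
  set P : Finset ι → Prop := fun F => ∑ i ∈ F, t i ≤ T ∧ ∀ i ∈ F, ∀ j ∉ F, h j ≤ h i
  obtain ⟨F, hFmem, hFmax⟩ := exists_max_image ((univ : Finset (Finset ι)).filter P) card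
    ⟨∅, by simp [P]⟩
  obtain ⟨hFT, hFup⟩ := (mem_filter.1 hFmem).2
  refine ⟨F, hFT, hFup, ?_⟩
  by_cases hF : F = univ
  · exact .inl hF
  have hFc : Fᶜ.Nonempty := nonempty_iff_ne_empty.2 ((compl_eq_empty_iff F).not.2 hF)
  obtain ⟨i₀, hi₀, hi₀max⟩ := exists_max_image Fᶜ h hFc
  have hi₀F : i₀ ∉ F := mem_compl.1 hi₀
  refine .inr ⟨i₀, hi₀F, ?_, fun j hj => hi₀max j (mem_compl.2 hj)⟩
  by_contra! hfit
  have hP : P (insert i₀ F) := by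
    refine ⟨by rwa [sum_insert hi₀F, add_comm], fun i hi j hj => ?_⟩
    rw [mem_insert, not_or] at hj
    rcases mem_insert.1 hi with rfl | hi
    · exact hi₀max j (mem_compl.2 hj.2)
    · exact hFup i hi j hj.2
  have hcard := hFmax _ (mem_filter.2 ⟨mem_univ _, hP⟩)
  rw [card_insert_of_notMem hi₀F] at hcard
  omega

theorem exists_knapsack_add_single_ge [Nonempty ι] (t : ι → ℕ) (T : ℕ) {h x : ι → ℝ}
    (hh : ∀ i, 0 ≤ h i) (hx0 : ∀ i, 0 ≤ x i) (hxt : ∀ i, x i ≤ t i) (hxT : ∑ i, x i ≤ T) :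
    ∃ (F : Finset ι) (i₀ : ι), ∑ i ∈ F, t i ≤ T ∧
      ∑ i, x i * h i ≤ ∑ i ∈ F, (t i : ℝ) * h i + t i₀ * h i₀ := by
  obtain ⟨F, hFT, hFup, rfl | ⟨i₀, hi₀, hover, hi₀max⟩⟩ := exists_greedy_split t h T
  · obtain ⟨i₀⟩ := ‹Nonempty ι›
    refine ⟨univ, i₀, hFT, ?_⟩
    have hbound := sum_mul_le_sum_mul_add_of_threshold univ le_rfl hx0 hxt hxT
      (fun i _ => hh i) (fun i hi => absurd (mem_univ i) hi)
    nlinarith [mul_nonneg (Nat.cast_nonneg (t i₀)) (hh i₀)]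
  · refine ⟨F, i₀, hFT, ?_⟩
    have hbound := sum_mul_le_sum_mul_add_of_threshold F (hh i₀) hx0 hxt hxT
      (fun i hi => hFup i hi i₀ hi₀) hi₀max
    have hslack : (T : ℝ) - ∑ i ∈ F, (t i : ℝ) ≤ t i₀ := by
      have : (T : ℝ) < ∑ i ∈ F, (t i : ℝ) + t i₀ := by exact_mod_cast hover
      linarith
    nlinarith [mul_le_mul_of_nonneg_left hslack (hh i₀)]

end Knapsack

theorem reduction_algorithm_competitive_general (n T : ℕ)
    (t h : Fin n → ℕ) (c : Fin n → ℕ → ℕ) (C α : ℝ) (hα : 0 < α)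
    (hcod : ∀ i j, c i j ≤ h i)
    -- accuracy of the hints:  h i ≤ C · (Σ_{j=1}^{t i} c i j) / t i
    (hacc : ∀ i, ((t i : ℝ) * (h i : ℝ)) ≤ C * ∑ j ∈ Finset.Icc 1 (t i), (c i j : ℝ))
    -- the black-box online knapsack algorithm and its α-competitiveness
    (S : Equiv.Perm (Fin n) → Finset (Fin n))
    (halg : ∀ F : Finset (Fin n), ∑ i ∈ F, t i ≤ T →
      (∑ i ∈ F, (t i : ℝ) * (h i : ℝ)) ≤
        α * ((∑ π : Equiv.Perm (Fin n), ∑ i ∈ S π, (t i : ℝ) * (h i : ℝ)) /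
              (Nat.factorial n)))
    -- the secretary algorithm and its e-competitiveness for the best single item
    (sec : Equiv.Perm (Fin n) → Fin n)
    (hsec : ∀ i, ((t i : ℝ) * (h i : ℝ)) ≤
        Real.exp 1 * ((∑ π : Equiv.Perm (Fin n),
            (t (sec π) : ℝ) * (h (sec π) : ℝ)) / (Nat.factorial n))) :
    -- conclusion: every feasible offline RAO solution τ is within (e+α)·C of the
    -- Reduction Algorithm's expected information gain
    ∀ τ : Fin n → ℕ, (∀ i, τ i ≤ t i) → (∑ i, τ i ≤ T) →
      (∑ i, ∑ j ∈ Finset.Icc 1 (τ i), (c i j : ℝ)) ≤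
        (Real.exp 1 + α) * C *
          ((α / (Real.exp 1 + α)) *
              ((∑ π : Equiv.Perm (Fin n), ∑ i ∈ S π,
                  ∑ j ∈ Finset.Icc 1 (t i), (c i j : ℝ)) / (Nat.factorial n)) +
           (Real.exp 1 / (Real.exp 1 + α)) *
              ((∑ π : Equiv.Perm (Fin n),
                  ∑ j ∈ Finset.Icc 1 (t (sec π)), (c (sec π) j : ℝ)) /
                (Nat.factorial n))) := by
  intro τ hτ hτT
  have : Nonempty (Fin n) := ⟨sec 1⟩
  obtain ⟨F, i₀, hF, hknap⟩ := exists_knapsack_add_single_ge t T (h := fun i => (h i : ℝ))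
    (x := fun i => (τ i : ℝ)) (fun _ => by positivity) (fun _ => by positivity)
    (fun i => by exact_mod_cast hτ i) (by exact_mod_cast hτT)
  have hinfo : ∀ i, ∑ j ∈ Icc 1 (τ i), (c i j : ℝ) ≤ τ i * h i := fun i =>
    (sum_le_card_nsmul _ _ (h i : ℝ) fun j _ => by exact_mod_cast hcod i j).trans_eq (by simp)
  have hALG : ∑ π : Equiv.Perm (Fin n), ∑ i ∈ S π, (t i : ℝ) * h i ≤
      C * ∑ π : Equiv.Perm (Fin n), ∑ i ∈ S π, ∑ j ∈ Icc 1 (t i), (c i j : ℝ) := by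
    rw [mul_sum]
    exact sum_le_sum fun π _ => (sum_le_sum fun i _ => hacc i).trans_eq (mul_sum ..).symm
  have hSEC : ∑ π : Equiv.Perm (Fin n), (t (sec π) : ℝ) * h (sec π) ≤
      C * ∑ π : Equiv.Perm (Fin n), ∑ j ∈ Icc 1 (t (sec π)), (c (sec π) j : ℝ) := by
    rw [mul_sum]
    exact sum_le_sum fun π _ => hacc (sec π)
  calc _ ≤ ∑ i, (τ i : ℝ) * h i := sum_le_sum fun i _ => hinfo i
    _ ≤ ∑ i ∈ F, (t i : ℝ) * h i + t i₀ * h i₀ := hknap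
    _ ≤ _ := add_le_add (halg F hF) (hsec i₀)
    _ ≤ α * (C * (∑ π : Equiv.Perm (Fin n), ∑ i ∈ S π, ∑ j ∈ Icc 1 (t i), (c i j : ℝ)) /
          n.factorial) + Real.exp 1 * (C * (∑ π : Equiv.Perm (Fin n),
          ∑ j ∈ Icc 1 (t (sec π)), (c (sec π) j : ℝ)) / n.factorial) := by
      gcongr
    _ = _ := by field_simp

/-- Given an `α`-competitive algorithm `ALG` for the Online Knapsack
Problem in the random order model (modeled by its selected set `S π` for each arrival
order `π`, with the competitiveness guarantee against every feasible integral
knapsack solution) and the `e`-competitive Secretary Algorithm (modeled by its pick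
`sec π`, with expected hint-value at least `(1/e) · max_i t i · h i`), the Reduction
Algorithm — run `ALG` (reading selected articles completely) with probability
`δ = α/(e+α)` and otherwise the Secretary Algorithm — is `(e + α)·C`-competitive for
RAO, where `C` is the accuracy of the hints and all `t i ≤ T`. -/
theorem reduction_algorithm_competitive (n T : ℕ) (hn : 0 < n)
    (t h : Fin n → ℕ) (c : Fin n → ℕ → ℕ) (C α : ℝ) (hC : 0 < C) (hα : 0 < α)
    (hcod : ∀ i j, c i j ≤ h i)
    (htpos : ∀ i, 0 < t i) (hhpos : ∀ i, 0 < h i) (htT : ∀ i, t i ≤ T)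
    -- accuracy of the hints:  h i ≤ C · (Σ_{j=1}^{t i} c i j) / t i
    (hacc : ∀ i, ((t i : ℝ) * (h i : ℝ)) ≤ C * ∑ j ∈ Finset.Icc 1 (t i), (c i j : ℝ))
    -- the black-box online knapsack algorithm and its α-competitiveness
    (S : Equiv.Perm (Fin n) → Finset (Fin n))
    (hSfeas : ∀ π, ∑ i ∈ S π, t i ≤ T)
    (halg : ∀ F : Finset (Fin n), ∑ i ∈ F, t i ≤ T →
      (∑ i ∈ F, (t i : ℝ) * (h i : ℝ)) ≤
        α * ((∑ π : Equiv.Perm (Fin n), ∑ i ∈ S π, (t i : ℝ) * (h i : ℝ)) /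
              (Nat.factorial n)))
    -- the secretary algorithm and its e-competitiveness for the best single item
    (sec : Equiv.Perm (Fin n) → Fin n)
    (hsec : ∀ i, ((t i : ℝ) * (h i : ℝ)) ≤
        Real.exp 1 * ((∑ π : Equiv.Perm (Fin n),
            (t (sec π) : ℝ) * (h (sec π) : ℝ)) / (Nat.factorial n))) :
    -- conclusion: every feasible offline RAO solution τ is within (e+α)·C of the
    -- Reduction Algorithm's expected information gain
    ∀ τ : Fin n → ℕ, (∀ i, τ i ≤ t i) → (∑ i, τ i ≤ T) →
      (∑ i, ∑ j ∈ Finset.Icc 1 (τ i), (c i j : ℝ)) ≤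
        (Real.exp 1 + α) * C *
          ((α / (Real.exp 1 + α)) *
              ((∑ π : Equiv.Perm (Fin n), ∑ i ∈ S π,
                  ∑ j ∈ Finset.Icc 1 (t i), (c i j : ℝ)) / (Nat.factorial n)) +
           (Real.exp 1 / (Real.exp 1 + α)) *
              ((∑ π : Equiv.Perm (Fin n),
                  ∑ j ∈ Finset.Icc 1 (t (sec π)), (c (sec π) j : ℝ)) /
                (Nat.factorial n))) :=
  reduction_algorithm_competitive_general n T t h c C α hα hcod hacc S halg sec hsec
end

section
/- Cutting lemma: Let I be an instance of KPH with budget T, lengths t_i, hints h_i, and let g ∈ (0,1]. Define the cut instance I'_g with the same budget and hints but lengths t'_i = min{t_i, gT}. Then Opt_KPH(I) ≤ Opt_KPH(I'_g)/g. -/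
/-- **Cutting lemma.** Let `I` be a KPH instance (fractional knapsack:
maximize `Σ h i · t i · y i` s.t. `Σ t i · y i ≤ T`, `y i ∈ [0,1]`) with budget `T`
and lengths `t i ≤ T`, and let `g ∈ (0,1]`.  For the cut instance with lengths
`t' i = min(t i, g·T)` (same budget and hints), the optima satisfy
`Opt_KPH(I) ≤ Opt_KPH(I'_g)/g`. -/
theorem cutting_lemma (n : ℕ) (T g : ℝ) (t h : Fin n → ℝ)
    (hT : 0 < T) (hg : 0 < g) (hg1 : g ≤ 1)
    (ht : ∀ i, 0 ≤ t i) (htT : ∀ i, t i ≤ T) (hh : ∀ i, 0 ≤ h i)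
    (O O' : ℝ)
    (hO : IsGreatest {v : ℝ | ∃ y : Fin n → ℝ, (∀ i, y i ∈ Set.Icc (0:ℝ) 1) ∧
        ∑ i, t i * y i ≤ T ∧ v = ∑ i, h i * t i * y i} O)
    (hO' : IsGreatest {v : ℝ | ∃ y : Fin n → ℝ, (∀ i, y i ∈ Set.Icc (0:ℝ) 1) ∧
        ∑ i, min (t i) (g * T) * y i ≤ T ∧ v = ∑ i, h i * min (t i) (g * T) * y i} O') :
    O ≤ O' / g := by
  obtain ⟨⟨y, hy, hfeas, hval⟩, _⟩ := hO
  obtain ⟨_, hub'⟩ := hO'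
  rw [le_div_iff₀ hg]
  have hfeas' : ∑ i, min (t i) (g * T) * y i ≤ T := by
    refine le_trans (Finset.sum_le_sum fun i _ => ?_) hfeas
    exact mul_le_mul_of_nonneg_right (min_le_left _ _) (hy i).1
  have hmem : (∑ i, h i * min (t i) (g * T) * y i) ∈
      {v : ℝ | ∃ y : Fin n → ℝ, (∀ i, y i ∈ Set.Icc (0:ℝ) 1) ∧
        ∑ i, min (t i) (g * T) * y i ≤ T ∧ v = ∑ i, h i * min (t i) (g * T) * y i} :=
    ⟨y, hy, hfeas', rfl⟩
  calc O * g = ∑ i, h i * (g * t i) * y i := by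
        rw [hval, Finset.sum_mul]; exact Finset.sum_congr rfl fun i _ => by ring
    _ ≤ ∑ i, h i * min (t i) (g * T) * y i := by
        refine Finset.sum_le_sum fun i _ => ?_
        refine mul_le_mul_of_nonneg_right (mul_le_mul_of_nonneg_left ?_ (hh i)) (hy i).1
        exact le_min (by nlinarith [ht i]) (by nlinarith [htT i])
    _ ≤ O' := hub' hmem
end

section
/- In the Threshold Algorithm's analysis with T = 1, g < 1/2, γ with γ + g > 3/2, and total cut length Σ t_i ≥ 3/2: conditioned on Z₁ = w^{(β)}(X \ {π(j)}) < 1/2 − g and Z₂ = w^{(γ)}(Y \ {π(j)}) < 1 − 2g, if article j with y^{(β)}(j) > 0 arrives in the second phase (π(j) ∈ Y), then h_j ≥ ρ_X^{(1/2)} and the total length of all articles the algorithm accepts from Y \ {π(j)} is at most g + Z₂ < 1 − g, so the algorithm reads article j completely (s_j = t_j). -/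
/-!
Everything rests on the exchange property of an optimal fractional knapsack solution `y`:
if `0 < y i₁` and `y i₂ < 1` then `h i₂ ≤ h i₁`, since otherwise moving length from `i₁` to
`i₂` would increase the value. The `γ`-solution fills its knapsack and puts less than `1 - g`
on `Y`, hence more than `1/2` on `X`; so the sample solution fills its knapsack of size `1/2`.
As the `β`-solution puts less than `1/2` on `X`, some `i ∈ X` has `yβ i < yX i`, whence
`ρ ≤ h i ≤ h j`. Likewise some `i ∈ X` has `yX i < yγ i`, whence `h i ≤ ρ`; an article `k ∈ Y`
with `ρ ≤ h k` and `yγ k < 1` would give `h k ≤ h i ≤ ρ ≤ h k`, impossible for distinct hints.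
So every article accepted from `Y ∖ {j}` lies fully in the `γ`-solution, and their total
length is at most `Z₂`.
-/

open Finset

variable {ι : Type*}

def IsThresholdHint (h : ι → ℝ) (X : Finset ι) (y : ι → ℝ) (ρ : ℝ) : Prop :=
  ∀ i ∈ X, (ρ < h i → y i = 1) ∧ (h i < ρ → y i = 0)

lemma IsThresholdHint.le_of_pos {h y : ι → ℝ} {X : Finset ι} {ρ : ℝ}
    (hρ : IsThresholdHint h X y ρ) {i : ι} (hi : i ∈ X) (hyi : 0 < y i) : ρ ≤ h i :=
  not_lt.1 fun hlt => hyi.ne' ((hρ i hi).2 hlt)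

lemma IsThresholdHint.le_of_lt_one {h y : ι → ℝ} {X : Finset ι} {ρ : ℝ}
    (hρ : IsThresholdHint h X y ρ) {i : ι} (hi : i ∈ X) (hyi : y i < 1) : h i ≤ ρ :=
  not_lt.1 fun hlt => hyi.ne ((hρ i hi).1 hlt)

lemma sum_filter_le_sum_mul_of_eq_one {t y : ι → ℝ} {s : Finset ι} {p : ι → Prop}
    [DecidablePred p] (ht : ∀ i ∈ s, 0 ≤ t i) (hy : ∀ i, 0 ≤ y i)
    (hy1 : ∀ i ∈ s, p i → y i = 1) : ∑ i ∈ s.filter p, t i ≤ ∑ i ∈ s, t i * y i :=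
  calc ∑ i ∈ s.filter p, t i = ∑ i ∈ s.filter p, t i * y i :=
        sum_congr rfl fun i hi => by
          rw [hy1 i (mem_of_mem_filter i hi) (mem_filter.1 hi).2, mul_one]
    _ ≤ ∑ i ∈ s, t i * y i :=
        sum_le_sum_of_subset_of_nonneg (filter_subset p s) fun i hi _ =>
          mul_nonneg (ht i hi) (hy i)

variable [Fintype ι]

/-- The fractional knapsack problem with hints of the paper: item `i` has length `t i` and value
`t i * h i`, `y i` is the fraction of it that is taken, and only items of `S` may be taken. -/
structure IsFeasibleFracKnapsack (t : ι → ℝ) (S : Finset ι) (c : ℝ) (y : ι → ℝ) : Prop where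
  mem_Icc : ∀ i, y i ∈ Set.Icc (0 : ℝ) 1
  eq_zero_of_notMem : ∀ i ∉ S, y i = 0
  weight_le : ∑ i, t i * y i ≤ c

structure IsOptimalFracKnapsack (t h : ι → ℝ) (S : Finset ι) (c : ℝ) (y : ι → ℝ) : Prop
    extends IsFeasibleFracKnapsack t S c y where
  value_le : ∀ z, IsFeasibleFracKnapsack t S c z →
    ∑ i, t i * h i * z i ≤ ∑ i, t i * h i * y i

lemma sum_mul_add_single [DecidableEq ι] (f y : ι → ℝ) (i : ι) (a : ℝ) :
    ∑ k, f k * (y + (Pi.single i a : ι → ℝ)) k = ∑ k, f k * y k + f i * a := by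
  simp [mul_add, sum_add_distrib, Pi.single_apply]

namespace IsFeasibleFracKnapsack

variable {t : ι → ℝ} {S : Finset ι} {c : ℝ} {y : ι → ℝ}

lemma sum_eq_sum_of_support (hy : IsFeasibleFracKnapsack t S c y) (f : ι → ℝ) :
    ∑ i, f i * y i = ∑ i ∈ S, f i * y i :=
  (sum_subset (subset_univ S) fun i _ hi => by rw [hy.eq_zero_of_notMem i hi, mul_zero]).symm

lemma add_single [DecidableEq ι] (hy : IsFeasibleFracKnapsack t S c y) {i : ι} {a : ℝ}
    (hi : i ∈ S) (hyi : y i + a ∈ Set.Icc (0 : ℝ) 1) (hw : ∑ k, t k * y k + t i * a ≤ c) :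
    IsFeasibleFracKnapsack t S c (y + (Pi.single i a : ι → ℝ)) where
  mem_Icc k := by
    rcases eq_or_ne k i with rfl | hk
    · simpa using hyi
    · simpa [hk] using hy.mem_Icc k
  eq_zero_of_notMem k hk := by
    have hki : k ≠ i := ne_of_mem_of_not_mem hi hk |>.symm
    simp [hki, hy.eq_zero_of_notMem k hk]
  weight_le := by rwa [sum_mul_add_single]

end IsFeasibleFracKnapsack

namespace IsOptimalFracKnapsack

variable {t h y y' : ι → ℝ} {S X : Finset ι} {c ρ : ℝ}

lemma le_of_pos_of_lt_one (hy : IsOptimalFracKnapsack t h S c y) (ht : ∀ i, 0 < t i)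
    {i₁ i₂ : ι} (hi₁ : i₁ ∈ S) (hi₂ : i₂ ∈ S) (h₁ : 0 < y i₁) (h₂ : y i₂ < 1) :
    h i₂ ≤ h i₁ := by
  classical
  rcases eq_or_ne i₁ i₂ with rfl | hne
  · rfl
  set ε := min (t i₁ * y i₁) (t i₂ * (1 - y i₂))
  have hε : 0 < ε := lt_min (mul_pos (ht i₁) h₁) (mul_pos (ht i₂) (by linarith))
  have hε₁ : ε / t i₁ ≤ y i₁ := (div_le_iff₀' (ht i₁)).2 (min_le_left _ _)
  have hε₂ : ε / t i₂ ≤ 1 - y i₂ := (div_le_iff₀' (ht i₂)).2 (min_le_right _ _)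
  have hy₁ := hy.mem_Icc i₁
  have hy₂ := hy.mem_Icc i₂
  have ht₁ : t i₁ * (ε / t i₁) = ε := mul_div_cancel₀ _ (ht i₁).ne'
  have ht₂ : t i₂ * (ε / t i₂) = ε := mul_div_cancel₀ _ (ht i₂).ne'
  -- shift a length `ε` of the knapsack from item `i₁` to item `i₂`
  set y' := y + (Pi.single i₁ (-(ε / t i₁)) : ι → ℝ)
  have hy'₂ : y' i₂ = y i₂ := by simp [y', hne.symm]
  have hw' : ∑ k, t k * y' k = ∑ k, t k * y k - ε := by
    rw [sum_mul_add_single, mul_neg, ht₁, sub_eq_add_neg]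
  have hfeas' : IsFeasibleFracKnapsack t S c y' :=
    hy.add_single hi₁ ⟨by linarith, by linarith [hy₁.2, div_pos hε (ht i₁)]⟩
      (by rw [mul_neg, ht₁]; linarith [hy.weight_le])
  have hfeas : IsFeasibleFracKnapsack t S c (y' + (Pi.single i₂ (ε / t i₂) : ι → ℝ)) :=
    hfeas'.add_single hi₂
      (by rw [hy'₂]; exact ⟨by linarith [hy₂.1, div_pos hε (ht i₂)], by linarith⟩)
      (by rw [hw', ht₂]; linarith [hy.weight_le])
  have hval := hy.value_le _ hfeas
  rw [sum_mul_add_single, sum_mul_add_single] at hval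
  have e₁ : t i₁ * h i₁ * -(ε / t i₁) = -(ε * h i₁) := by rw [mul_neg, mul_right_comm, ht₁]
  have e₂ : t i₂ * h i₂ * (ε / t i₂) = ε * h i₂ := by rw [mul_right_comm, ht₂]
  rw [e₁, e₂] at hval
  have : ε * (h i₂ - h i₁) ≤ 0 := by linarith
  exact sub_nonpos.1 (nonpos_of_mul_nonpos_right this hε)

lemma weight_eq (hy : IsOptimalFracKnapsack t h S c y) (ht : ∀ i, 0 < t i)
    (hh : ∀ i ∈ S, 0 < h i) (hc : c ≤ ∑ i ∈ S, t i) : ∑ i, t i * y i = c := by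
  classical
  refine hy.weight_le.antisymm (not_lt.1 fun hlt => ?_)
  obtain ⟨i, hi, hyi⟩ : ∃ i ∈ S, y i < 1 := by
    have : ∑ i ∈ S, t i * y i < ∑ i ∈ S, t i := by
      rw [← hy.sum_eq_sum_of_support]; linarith
    obtain ⟨i, hi, hlt⟩ := exists_lt_of_sum_lt this
    exact ⟨i, hi, (mul_lt_iff_lt_one_right (ht i)).1 hlt⟩
  set ε := min (1 - y i) ((c - ∑ k, t k * y k) / t i)
  have hε : 0 < ε := lt_min (by linarith) (div_pos (by linarith) (ht i))
  have hεy : ε ≤ 1 - y i := min_le_left _ _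
  have hεw : t i * ε ≤ c - ∑ k, t k * y k := (le_div_iff₀' (ht i)).1 (min_le_right _ _)
  have hfeas : IsFeasibleFracKnapsack t S c (y + (Pi.single i ε : ι → ℝ)) :=
    hy.add_single hi ⟨by linarith [(hy.mem_Icc i).1], by linarith⟩ (by linarith)
  have hval := hy.value_le _ hfeas
  rw [sum_mul_add_single] at hval
  linarith [mul_pos (mul_pos (ht i) (hh i hi)) hε]


lemma threshold_le_of_pos (hy : IsOptimalFracKnapsack t h univ c y) (ht : ∀ i, 0 < t i)
    (hρ : IsThresholdHint h X y' ρ) (hy' : ∀ i, y' i ≤ 1)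
    (hX : ∑ i ∈ X, t i * y i < ∑ i ∈ X, t i * y' i) {j : ι} (hj : 0 < y j) : ρ ≤ h j := by
  obtain ⟨i, hi, hlt⟩ := exists_lt_of_sum_lt hX
  have hlt : y i < y' i := lt_of_mul_lt_mul_left hlt (ht i).le
  calc ρ ≤ h i := hρ.le_of_pos hi ((hy.mem_Icc i).1.trans_lt hlt)
    _ ≤ h j := hy.le_of_pos_of_lt_one ht (mem_univ j) (mem_univ i) hj (hlt.trans_le (hy' i))

lemma eq_one_of_threshold_le (hy : IsOptimalFracKnapsack t h univ c y) (ht : ∀ i, 0 < t i)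
    (hinj : Function.Injective h) (hρ : IsThresholdHint h X y' ρ) (hy' : ∀ i, 0 ≤ y' i)
    (hX : ∑ i ∈ X, t i * y' i < ∑ i ∈ X, t i * y i) {k : ι} (hk : k ∉ X) (hρk : ρ ≤ h k) :
    y k = 1 := by
  by_contra hk1
  obtain ⟨i, hi, hlt⟩ := exists_lt_of_sum_lt hX
  have hlt : y' i < y i := lt_of_mul_lt_mul_left hlt (ht i).le
  have hiρ : h i ≤ ρ := hρ.le_of_lt_one hi (hlt.trans_le (hy.mem_Icc i).2)
  have hki : h k ≤ h i := hy.le_of_pos_of_lt_one ht (mem_univ i) (mem_univ k)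
    ((hy' i).trans_lt hlt) (lt_of_le_of_ne (hy.mem_Icc k).2 hk1)
  obtain rfl : k = i := hinj (hki.antisymm (hiρ.trans hρk))
  exact hk hi

end IsOptimalFracKnapsack

theorem threshold_algorithm_claim_general (n : ℕ) (t h : Fin n → ℝ) (g β γ ρ : ℝ)
    (X : Finset (Fin n)) (j : Fin n) (yβ yγ yX : Fin n → ℝ)
    (ht : ∀ i, 0 < t i) (htg : ∀ i, t i ≤ g)
    (hdist : Function.Injective h) (hhpos : ∀ i, 0 < h i)
    (hg : 0 < g)
    (hγg : 3 / 2 < γ + g) (hγsum : γ ≤ ∑ i, t i)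
    -- yβ is the optimal fractional solution at capacity β
    (hyβ01 : ∀ i, yβ i ∈ Set.Icc (0:ℝ) 1) (hyβw : ∑ i, t i * yβ i ≤ β)
    (hyβopt : ∀ y : Fin n → ℝ, (∀ i, y i ∈ Set.Icc (0:ℝ) 1) →
      (∑ i, t i * y i ≤ β) → ∑ i, t i * h i * y i ≤ ∑ i, t i * h i * yβ i)
    -- yγ is the optimal fractional solution at capacity γ
    (hyγ01 : ∀ i, yγ i ∈ Set.Icc (0:ℝ) 1) (hyγw : ∑ i, t i * yγ i ≤ γ)
    (hyγopt : ∀ y : Fin n → ℝ, (∀ i, y i ∈ Set.Icc (0:ℝ) 1) →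
      (∑ i, t i * y i ≤ γ) → ∑ i, t i * h i * y i ≤ ∑ i, t i * h i * yγ i)
    -- yX is the optimal fractional solution on the sample X at capacity 1/2
    (hyX01 : ∀ i, yX i ∈ Set.Icc (0:ℝ) 1) (hyXQ : ∀ i, i ∉ X → yX i = 0)
    (hyXw : ∑ i, t i * yX i ≤ 1 / 2)
    (hyXopt : ∀ y : Fin n → ℝ, (∀ i, y i ∈ Set.Icc (0:ℝ) 1) → (∀ i, i ∉ X → y i = 0) →
      (∑ i, t i * y i ≤ 1 / 2) → ∑ i, t i * h i * y i ≤ ∑ i, t i * h i * yX i)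
    -- ρ is the threshold hint of yX
    (hρ : ∀ i ∈ X, (ρ < h i → yX i = 1) ∧ (h i < ρ → yX i = 0))
    -- article j: in the β-solution, arriving in the selection phase
    (hj : 0 < yβ j) (hjY : j ∉ X)
    -- the conditioning events
    (hZ1 : ∑ i ∈ X, t i * yβ i < 1 / 2 - g)
    (hZ2 : ∑ i ∈ Xᶜ.erase j, t i * yγ i < 1 - 2 * g) :
    ρ ≤ h j ∧
    (∑ i ∈ (Xᶜ.erase j).filter (fun i => ρ ≤ h i), t i)
        ≤ g + ∑ i ∈ Xᶜ.erase j, t i * yγ i ∧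
    (∑ i ∈ (Xᶜ.erase j).filter (fun i => ρ ≤ h i), t i) + t j ≤ 1 := by
  have hβ : IsOptimalFracKnapsack t h univ β yβ :=
    ⟨⟨hyβ01, by simp, hyβw⟩, fun z hz => hyβopt z hz.mem_Icc hz.weight_le⟩
  have hγ : IsOptimalFracKnapsack t h univ γ yγ :=
    ⟨⟨hyγ01, by simp, hyγw⟩, fun z hz => hyγopt z hz.mem_Icc hz.weight_le⟩
  have hX : IsOptimalFracKnapsack t h X (1 / 2) yX :=
    ⟨⟨hyX01, hyXQ, hyXw⟩, fun z hz => hyXopt z hz.mem_Icc hz.eq_zero_of_notMem hz.weight_le⟩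
  have hγX : 1 / 2 < ∑ i ∈ X, t i * yγ i := by
    have hfull := hγ.weight_eq ht (fun i _ => hhpos i) (by simpa using hγsum)
    rw [← sum_add_sum_compl X, ← sum_erase_add _ _ (mem_compl.2 hjY)] at hfull
    have htj : t j * yγ j ≤ g := mul_le_of_le_one_right (ht j).le (hyγ01 j).2 |>.trans (htg j)
    linarith
  have hXfull : ∑ i ∈ X, t i * yX i = 1 / 2 := by
    rw [← hX.sum_eq_sum_of_support]
    refine hX.weight_eq ht (fun i _ => hhpos i) (hγX.le.trans (sum_le_sum fun i _ => ?_))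
    exact mul_le_of_le_one_right (ht i).le (hyγ01 i).2
  have hρj : ρ ≤ h j := hβ.threshold_le_of_pos ht hρ (fun i => (hyX01 i).2) (by linarith) hj
  have haccepted := sum_filter_le_sum_mul_of_eq_one (s := Xᶜ.erase j) (p := fun i => ρ ≤ h i)
    (fun i _ => (ht i).le) (fun i => (hyγ01 i).1) fun k hk =>
      hγ.eq_one_of_threshold_le ht hdist hρ (fun i => (hyX01 i).1) (by linarith)
        (mem_compl.1 (mem_of_mem_erase hk))
  exact ⟨hρj, by linarith, by linarith [htg j]⟩

/-- **key claim of the Threshold Algorithm analysis.** Budget scaled to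
`T = 1`; all article lengths satisfy `0 < t i ≤ g` with `g < 1/2`; hints `h i` are
positive and pairwise distinct; `γ + g > 3/2`, `γ ≤ Σ t i`, `Σ t i ≥ 3/2`.  Let `yβ`,
`yγ` be optimal fractional KPH solutions at capacities `β ∈ (0,1]` and `γ > 1` over
all articles, let `X` be the sample phase and `Y = Xᶜ` the selection phase, let `yX`
be the optimal fractional KPH solution on `X` with capacity `1/2`, and let `ρ` be its
threshold hint.  Suppose article `j` has `yβ j > 0` and arrives in the second phase
(`j ∉ X`), and that `Z₁ = Σ_{i∈X} t i · yβ i < 1/2 − g` and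
`Z₂ = Σ_{i∈Y∖{j}} t i · yγ i < 1 − 2g`.  Then `h j ≥ ρ` and the total length of all
articles the algorithm accepts from `Y ∖ {j}` (those with hint `≥ ρ`) is at most
`g + Z₂ < 1 − g`; hence, since `t j ≤ g`, the algorithm reads article `j`
completely. -/
theorem threshold_algorithm_claim (n : ℕ) (t h : Fin n → ℝ) (g β γ ρ : ℝ)
    (X : Finset (Fin n)) (j : Fin n) (yβ yγ yX : Fin n → ℝ)
    (ht : ∀ i, 0 < t i) (htg : ∀ i, t i ≤ g)
    (hdist : Function.Injective h) (hhpos : ∀ i, 0 < h i)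
    (hg : 0 < g) (hg2 : g < 1 / 2)
    (hβpos : 0 < β) (hβ1 : β ≤ 1)
    (hγ1 : 1 < γ) (hγg : 3 / 2 < γ + g) (hγsum : γ ≤ ∑ i, t i)
    (hsum : 3 / 2 ≤ ∑ i, t i)
    -- yβ is the optimal fractional solution at capacity β
    (hyβ01 : ∀ i, yβ i ∈ Set.Icc (0:ℝ) 1) (hyβw : ∑ i, t i * yβ i ≤ β)
    (hyβopt : ∀ y : Fin n → ℝ, (∀ i, y i ∈ Set.Icc (0:ℝ) 1) →
      (∑ i, t i * y i ≤ β) → ∑ i, t i * h i * y i ≤ ∑ i, t i * h i * yβ i)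
    -- yγ is the optimal fractional solution at capacity γ
    (hyγ01 : ∀ i, yγ i ∈ Set.Icc (0:ℝ) 1) (hyγw : ∑ i, t i * yγ i ≤ γ)
    (hyγopt : ∀ y : Fin n → ℝ, (∀ i, y i ∈ Set.Icc (0:ℝ) 1) →
      (∑ i, t i * y i ≤ γ) → ∑ i, t i * h i * y i ≤ ∑ i, t i * h i * yγ i)
    -- yX is the optimal fractional solution on the sample X at capacity 1/2
    (hyX01 : ∀ i, yX i ∈ Set.Icc (0:ℝ) 1) (hyXQ : ∀ i, i ∉ X → yX i = 0)
    (hyXw : ∑ i, t i * yX i ≤ 1 / 2)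
    (hyXopt : ∀ y : Fin n → ℝ, (∀ i, y i ∈ Set.Icc (0:ℝ) 1) → (∀ i, i ∉ X → y i = 0) →
      (∑ i, t i * y i ≤ 1 / 2) → ∑ i, t i * h i * y i ≤ ∑ i, t i * h i * yX i)
    -- ρ is the threshold hint of yX
    (hρ : ∀ i ∈ X, (ρ < h i → yX i = 1) ∧ (h i < ρ → yX i = 0))
    -- article j: in the β-solution, arriving in the selection phase
    (hj : 0 < yβ j) (hjY : j ∉ X)
    -- the conditioning events
    (hZ1 : ∑ i ∈ X, t i * yβ i < 1 / 2 - g)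
    (hZ2 : ∑ i ∈ Xᶜ.erase j, t i * yγ i < 1 - 2 * g) :
    ρ ≤ h j ∧
    (∑ i ∈ (Xᶜ.erase j).filter (fun i => ρ ≤ h i), t i)
        ≤ g + ∑ i ∈ Xᶜ.erase j, t i * yγ i ∧
    (∑ i ∈ (Xᶜ.erase j).filter (fun i => ρ ≤ h i), t i) + t j ≤ 1 :=
  threshold_algorithm_claim_general n t h g β γ ρ X j yβ yγ yX ht htg hdist hhpos hg hγg hγsum hyβ01
    hyβw hyβopt hyγ01 hyγw hyγopt hyX01 hyXQ hyXw hyXopt hρ hj hjY hZ1 hZ2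
end

section
/- If for every article j with y^{(β)}(j) > 0 in the optimal fractional KPH solution of capacity β we have P[algorithm reads j completely] ≥ p, and the hints satisfy h_i ≤ C·(Σ_{j=1}^{t_i} c_i(j))/t_i, then Opt(I) ≤ Opt_KPH(I) ≤ (1/g)·Opt_KPH(I'_g) ≤ (1/(gβ))·Σ_i t_i·h_i·y^{(β)}(i) ≤ (C/(gβp))·E[algorithm's information gain]. -/
/-!
An integral reading plan `τ` is the fractional knapsack point `τ i / t i`, and no article
yields more than `h i` per unit, so `Opt(I) ≤ Opt_KPH(I)`. Cutting lengths at `g T` keeps every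
fractional solution feasible and loses at most a factor `g` of its value. Scaling the optimum
of the cut instance by `β` gives a point of capacity `β T`, whence the third inequality. Finally,
every article in the support of `yβ` is read completely with probability at least `p`, and
`C`-accuracy bounds its contribution `t' i h i yβ i` by `C` times its information gain.
-/

open Finset

section FractionalKnapsack

variable {ι : Type*} [Fintype ι]

def fracKnapsackValues (w v : ι → ℝ) (cap : ℝ) : Set ℝ :=
  {x | ∃ y : ι → ℝ, (∀ i, y i ∈ Set.Icc (0 : ℝ) 1) ∧ ∑ i, w i * y i ≤ cap ∧
    x = ∑ i, w i * v i * y i}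

theorem natCast_mul_sum_mem_fracKnapsackValues {t τ h : ι → ℕ} {T : ℕ}
    (hτ : ∀ i, τ i ≤ t i) (hτT : ∑ i, τ i ≤ T) :
    ∑ i, (τ i : ℝ) * h i ∈
      fracKnapsackValues (fun i => (t i : ℝ)) (fun i => (h i : ℝ)) T := by
  have hcancel : ∀ i, (t i : ℝ) * (τ i / t i) = τ i := fun i =>
    mul_div_cancel_of_imp' fun ht => by
      have : t i = 0 := by exact_mod_cast ht
      simpa [this] using hτ i
  refine ⟨fun i => τ i / t i, fun i => ⟨by positivity, ?_⟩, ?_, ?_⟩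
  · exact div_le_one_of_le₀ (by exact_mod_cast hτ i) (by positivity)
  · simp only [hcancel]
    exact_mod_cast hτT
  · refine sum_congr rfl fun i _ => ?_
    rw [mul_right_comm, hcancel, mul_comm]

theorem mul_mem_fracKnapsackValues {w v : ι → ℝ} {cap β x : ℝ} (hβ : 0 ≤ β)
    (hβ1 : β ≤ 1) (hx : x ∈ fracKnapsackValues w v cap) :
    β * x ∈ fracKnapsackValues w v (β * cap) := by
  obtain ⟨y, hy, hcap, rfl⟩ := hx
  refine ⟨fun i => β * y i, fun i => ⟨mul_nonneg hβ (hy i).1, ?_⟩, ?_, ?_⟩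
  · exact mul_le_one₀ hβ1 (hy i).1 (hy i).2
  · simp only [mul_left_comm _ β, ← mul_sum]
    exact mul_le_mul_of_nonneg_left hcap hβ
  · simp only [mul_sum, mul_left_comm _ β]

theorem mul_le_of_mem_fracKnapsackValues {w w' v : ι → ℝ} {cap g x x' : ℝ}
    (hv : ∀ i, 0 ≤ v i) (hw' : ∀ i, w' i ≤ w i) (hgw : ∀ i, g * w i ≤ w' i)
    (hx : x ∈ fracKnapsackValues w v cap)
    (hx' : x' ∈ upperBounds (fracKnapsackValues w' v cap)) :
    g * x ≤ x' := by
  obtain ⟨y, hy, hcap, rfl⟩ := hx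
  have hfeas : ∑ i, w' i * y i ≤ cap :=
    (sum_le_sum fun i _ => mul_le_mul_of_nonneg_right (hw' i) (hy i).1).trans hcap
  calc g * ∑ i, w i * v i * y i
      = ∑ i, g * w i * (v i * y i) := by simp only [mul_sum, mul_assoc]
    _ ≤ ∑ i, w' i * (v i * y i) :=
        sum_le_sum fun i _ => mul_le_mul_of_nonneg_right (hgw i) (mul_nonneg (hv i) (hy i).1)
    _ = ∑ i, w' i * v i * y i := by simp only [mul_assoc]
    _ ≤ x' := hx' ⟨y, hy, hfeas, rfl⟩

end FractionalKnapsack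

theorem sum_Icc_natCast_le_mul {c : ℕ → ℕ} {h : ℕ} (hc : ∀ j, c j ≤ h) (τ : ℕ) :
    ∑ j ∈ Icc 1 τ, (c j : ℝ) ≤ τ * h := by
  simpa using sum_le_sum fun j (_ : j ∈ Icc 1 τ) => (Nat.cast_le.2 (hc j) : (c j : ℝ) ≤ h)

theorem sum_filter_mem_mul_eq_sum_mul_sum {Ω ι R : Type*} [Fintype Ω] [Fintype ι]
    [DecidableEq ι] [NonUnitalNonAssocSemiring R] (w : Ω → R) (comp : Ω → Finset ι)
    (b : ι → R) :
    ∑ i, (∑ ω ∈ univ.filter (fun ω => i ∈ comp ω), w ω) * b i =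
      ∑ ω, w ω * ∑ i ∈ comp ω, b i := by
  simp only [sum_filter, sum_mul, mul_sum]
  rw [sum_comm]
  simp

theorem mul_mul_le_of_pos_imp_le {p P a b x : ℝ} (hx : x ∈ Set.Icc (0 : ℝ) 1) (ha : 0 ≤ a)
    (hab : a ≤ b) (hP : 0 ≤ P) (hpP : 0 < x → p ≤ P) : p * (a * x) ≤ P * b := by
  rcases hx.1.eq_or_lt with rfl | hx0
  · simpa using mul_nonneg hP (ha.trans hab)
  · calc p * (a * x) ≤ P * (a * x) := mul_le_mul_of_nonneg_right (hpP hx0) (mul_nonneg ha hx.1)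
      _ ≤ P * b := mul_le_mul_of_nonneg_left ((mul_le_of_le_one_right ha hx.2).trans hab) hP

theorem mul_sum_le_mul_expected_gain {Ω ι : Type*} [Fintype Ω] [Fintype ι] [DecidableEq ι]
    {w : Ω → ℝ} {comp : Ω → Finset ι} {a e x : ι → ℝ} {p C : ℝ}
    (hw : ∀ ω, 0 ≤ w ω) (hx : ∀ i, x i ∈ Set.Icc (0 : ℝ) 1) (ha : ∀ i, 0 ≤ a i)
    (hae : ∀ i, a i ≤ C * e i)
    (hp : ∀ i, 0 < x i → p ≤ ∑ ω ∈ univ.filter (fun ω => i ∈ comp ω), w ω) :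
    p * ∑ i, a i * x i ≤ C * ∑ ω, w ω * ∑ i ∈ comp ω, e i := by
  calc p * ∑ i, a i * x i
      ≤ ∑ i, (∑ ω ∈ univ.filter (fun ω => i ∈ comp ω), w ω) * (C * e i) := by
        rw [mul_sum]
        exact sum_le_sum fun i _ =>
          mul_mul_le_of_pos_imp_le (hx i) (ha i) (hae i) (sum_nonneg fun ω _ => hw ω) (hp i)
    _ = C * ∑ ω, w ω * ∑ i ∈ comp ω, e i := by
        rw [sum_filter_mem_mul_eq_sum_mul_sum, mul_sum]
        simp only [mul_sum, mul_left_comm C]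

theorem threshold_inequality_chain_general (n T : ℕ)
    (t h : Fin n → ℕ) (c : Fin n → ℕ → ℕ) (g β p C : ℝ)
    (hg : 0 < g) (hg1 : g ≤ 1) (hβ : 0 < β) (hβ1 : β ≤ 1) (hp : 0 < p)
    (htT : ∀ i, t i ≤ T)
    (hcod : ∀ i j, c i j ≤ h i)
    (t' : Fin n → ℝ) (ht' : ∀ i, t' i = min (t i : ℝ) (g * T))
    (infoCut : Fin n → ℝ)
    -- C-accuracy of the hints on the cut instance
    (hacc : ∀ i, t' i * (h i : ℝ) ≤ C * infoCut i)
    (OptI OKPH OKPH' : ℝ)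
    -- offline RAO optimum of I
    (hOptI : IsGreatest {v : ℝ | ∃ τ : Fin n → ℕ, (∀ i, τ i ≤ t i) ∧ (∑ i, τ i ≤ T) ∧
        v = ∑ i, ∑ j ∈ Finset.Icc 1 (τ i), (c i j : ℝ)} OptI)
    -- fractional KPH optimum of I
    (hOKPH : IsGreatest {v : ℝ | ∃ y : Fin n → ℝ, (∀ i, y i ∈ Set.Icc (0:ℝ) 1) ∧
        ∑ i, (t i : ℝ) * y i ≤ T ∧ v = ∑ i, (t i : ℝ) * (h i : ℝ) * y i} OKPH)
    -- fractional KPH optimum of the cut instance I'_g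
    (hOKPH' : IsGreatest {v : ℝ | ∃ y : Fin n → ℝ, (∀ i, y i ∈ Set.Icc (0:ℝ) 1) ∧
        ∑ i, t' i * y i ≤ T ∧ v = ∑ i, t' i * (h i : ℝ) * y i} OKPH')
    -- yβ : optimal fractional KPH solution of I'_g at capacity β·T
    (yβ : Fin n → ℝ)
    (hyβ01 : ∀ i, yβ i ∈ Set.Icc (0:ℝ) 1)
    (hyβopt : ∀ y : Fin n → ℝ, (∀ i, y i ∈ Set.Icc (0:ℝ) 1) →
      (∑ i, t' i * y i ≤ β * T) → ∑ i, t' i * (h i : ℝ) * y i ≤ ∑ i, t' i * (h i : ℝ) * yβ i)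
    -- the algorithm, as a finite probability space with the set of fully read articles
    (Ω : Type*) [Fintype Ω] (w : Ω → ℝ) (hw : ∀ ω, 0 ≤ w ω)
    (comp : Ω → Finset (Fin n))
    (hp' : ∀ i, 0 < yβ i → p ≤ ∑ ω ∈ Finset.univ.filter (fun ω => i ∈ comp ω), w ω) :
    OptI ≤ OKPH ∧
    OKPH ≤ OKPH' / g ∧
    OKPH' / g ≤ (1 / (g * β)) * ∑ i, t' i * (h i : ℝ) * yβ i ∧
    (1 / (g * β)) * (∑ i, t' i * (h i : ℝ) * yβ i) ≤
      (C / (g * β * p)) * ∑ ω, w ω * ∑ i ∈ comp ω, infoCut i := by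
  have ht'le : ∀ i, t' i ≤ t i := fun i => (ht' i).trans_le (min_le_left _ _)
  have hgt' : ∀ i, g * t i ≤ t' i := fun i => by
    have htT' : (t i : ℝ) ≤ T := by exact_mod_cast htT i
    rw [ht' i]
    exact le_min (mul_le_of_le_one_left (by positivity) hg1)
      (mul_le_mul_of_nonneg_left htT' hg.le)
  have ht'h : ∀ i, 0 ≤ t' i * h i := fun i =>
    mul_nonneg ((mul_nonneg hg.le (Nat.cast_nonneg _)).trans (hgt' i)) (Nat.cast_nonneg _)
  have hyβ_upper :
      ∑ i, t' i * h i * yβ i ∈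
        upperBounds (fracKnapsackValues t' (fun i => h i) (β * T)) := by
    rintro _ ⟨y, hy, hcap, rfl⟩
    exact hyβopt y hy hcap
  obtain ⟨⟨τ, hτ, hτT, rfl⟩, -⟩ := hOptI
  refine ⟨?_, ?_, ?_, ?_⟩
  · calc ∑ i, ∑ j ∈ Icc 1 (τ i), (c i j : ℝ) ≤ ∑ i, (τ i : ℝ) * h i :=
          sum_le_sum fun i _ => sum_Icc_natCast_le_mul (hcod i) (τ i)
      _ ≤ OKPH := hOKPH.2 (natCast_mul_sum_mem_fracKnapsackValues hτ hτT)
  · rw [le_div_iff₀' hg]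
    exact mul_le_of_mem_fracKnapsackValues (fun i => Nat.cast_nonneg (h i)) ht'le hgt'
      hOKPH.1 hOKPH'.2
  · have hscaled := hyβ_upper (mul_mem_fracKnapsackValues hβ.le hβ1 hOKPH'.1)
    calc OKPH' / g = 1 / (g * β) * (β * OKPH') := by field_simp
      _ ≤ _ := by gcongr
  · have hgain := mul_sum_le_mul_expected_gain hw hyβ01 ht'h hacc hp'
    calc 1 / (g * β) * ∑ i, t' i * h i * yβ i
        = 1 / (g * β * p) * (p * ∑ i, t' i * h i * yβ i) := by field_simp
      _ ≤ 1 / (g * β * p) * (C * ∑ ω, w ω * ∑ i ∈ comp ω, infoCut i) := by gcongr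
      _ = _ := by ring

/-- **main inequality chain of the Threshold Algorithm analysis.**
With `I'_g` the instance cut at length `g·T`, `yβ` the optimal fractional KPH solution
of `I'_g` at capacity `β·T`, `p` a lower bound on the probability that the algorithm
reads each article `j` with `yβ j > 0` completely, and `C`-accurate hints for the cut
instance (`t' i · h i ≤ C · infoCut i`), one has
`Opt(I) ≤ Opt_KPH(I) ≤ Opt_KPH(I'_g)/g ≤ (1/(gβ))·Σ t' i · h i · yβ i
  ≤ (C/(gβp))·E[algorithm's information gain]`. -/
theorem threshold_inequality_chain (n T : ℕ) (hT : 0 < T)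
    (t h : Fin n → ℕ) (c : Fin n → ℕ → ℕ) (g β p C : ℝ)
    (hg : 0 < g) (hg1 : g ≤ 1) (hβ : 0 < β) (hβ1 : β ≤ 1) (hp : 0 < p) (hC : 0 < C)
    (htpos : ∀ i, 0 < t i) (htT : ∀ i, t i ≤ T)
    (hcod : ∀ i j, c i j ≤ h i)
    (t' : Fin n → ℝ) (ht' : ∀ i, t' i = min (t i : ℝ) (g * T))
    (infoCut : Fin n → ℝ) (hinfo : ∀ i, 0 ≤ infoCut i)
    -- C-accuracy of the hints on the cut instance
    (hacc : ∀ i, t' i * (h i : ℝ) ≤ C * infoCut i)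
    (OptI OKPH OKPH' : ℝ)
    -- offline RAO optimum of I
    (hOptI : IsGreatest {v : ℝ | ∃ τ : Fin n → ℕ, (∀ i, τ i ≤ t i) ∧ (∑ i, τ i ≤ T) ∧
        v = ∑ i, ∑ j ∈ Finset.Icc 1 (τ i), (c i j : ℝ)} OptI)
    -- fractional KPH optimum of I
    (hOKPH : IsGreatest {v : ℝ | ∃ y : Fin n → ℝ, (∀ i, y i ∈ Set.Icc (0:ℝ) 1) ∧
        ∑ i, (t i : ℝ) * y i ≤ T ∧ v = ∑ i, (t i : ℝ) * (h i : ℝ) * y i} OKPH)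
    -- fractional KPH optimum of the cut instance I'_g
    (hOKPH' : IsGreatest {v : ℝ | ∃ y : Fin n → ℝ, (∀ i, y i ∈ Set.Icc (0:ℝ) 1) ∧
        ∑ i, t' i * y i ≤ T ∧ v = ∑ i, t' i * (h i : ℝ) * y i} OKPH')
    -- yβ : optimal fractional KPH solution of I'_g at capacity β·T
    (yβ : Fin n → ℝ)
    (hyβ01 : ∀ i, yβ i ∈ Set.Icc (0:ℝ) 1) (hyβw : ∑ i, t' i * yβ i ≤ β * T)
    (hyβopt : ∀ y : Fin n → ℝ, (∀ i, y i ∈ Set.Icc (0:ℝ) 1) →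
      (∑ i, t' i * y i ≤ β * T) → ∑ i, t' i * (h i : ℝ) * y i ≤ ∑ i, t' i * (h i : ℝ) * yβ i)
    -- the algorithm, as a finite probability space with the set of fully read articles
    (Ω : Type*) [Fintype Ω] (w : Ω → ℝ) (hw : ∀ ω, 0 ≤ w ω) (hw1 : ∑ ω, w ω = 1)
    (comp : Ω → Finset (Fin n))
    (hp' : ∀ i, 0 < yβ i → p ≤ ∑ ω ∈ Finset.univ.filter (fun ω => i ∈ comp ω), w ω) :
    OptI ≤ OKPH ∧
    OKPH ≤ OKPH' / g ∧
    OKPH' / g ≤ (1 / (g * β)) * ∑ i, t' i * (h i : ℝ) * yβ i ∧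
    (1 / (g * β)) * (∑ i, t' i * (h i : ℝ) * yβ i) ≤
      (C / (g * β * p)) * ∑ ω, w ω * ∑ i ∈ comp ω, infoCut i :=
  threshold_inequality_chain_general n T t h c g β p C hg hg1 hβ hβ1 hp htT hcod t' ht' infoCut hacc
    OptI OKPH OKPH' hOptI hOKPH hOKPH' yβ hyβ01 hyβopt Ω w hw comp hp'
end
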